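/- arXiv:1404.5591 — 4 statements merged into one kernel-verified Lean document; each statement's English description precedes it below -/
import Mathlib

section
/- Let X and Y be independent exponential random variables with rates λ and μ. The random variable S = λX + μY is independent of the event [X<Y], and conditional on [X<Y], S is distributed as the sum of two independent exponential(1) random variables. -/
/-!
Disintegrating along `X`, the slice of `{λX + μY ≤ t, aX < Y}` at `X = x ≥ 0` has
`Exp(μ)`-measure `(e^{-aμx} - e^{-(t - λx)})⁺`; multiplied by the density `λe^{-λx}` this is
`λ (e^{-(λ + aμ)x} - e^{-t})⁺`, a function of `(λ + aμ)x` only. The substitution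
`y = (λ + aμ)x` therefore gives `P(λX + μY ≤ t, aX < Y) = λ/(λ + aμ) · H(t)` with `H` not
depending on `λ, μ, a`. Taking `a = 1` and `a = 0` (where `aX < Y` holds almost surely) yields
the independence, and `H` is then also the distribution function of `X' + Y'` for independent
`X', Y' ~ Exp(1)`.
-/

open MeasureTheory ProbabilityTheory Real Set

lemma setLIntegral_Ici_comp_mul_left {c : ℝ} (hc : 0 < c) (f : ℝ → ENNReal) :
    ∫⁻ x in Ici 0, f (c * x) = ENNReal.ofReal c⁻¹ * ∫⁻ y in Ici 0, f y := by
  have he : MeasurableEmbedding (c * ·) := (Homeomorph.mulLeft₀ c hc.ne').measurableEmbedding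
  have hpre : (c * ·) ⁻¹' Ici 0 = Ici (0 : ℝ) := by
    ext x; simp [mul_nonneg_iff_of_pos_left hc]
  conv_lhs => rw [← hpre]
  rw [← he.lintegral_map, ← he.restrict_map, Real.map_volume_mul_left hc.ne',
    Measure.restrict_smul, lintegral_smul_measure, abs_of_pos (inv_pos.2 hc), smul_eq_mul]

lemma lintegral_Ici_exp_neg : ∫⁻ y in Ici 0, ENNReal.ofReal (exp (-y)) = 1 := by
  rw [← setLIntegral_congr Ioi_ae_eq_Ici, ← ofReal_integral_eq_lintegral_ofReal
    (integrableOn_exp_neg_Ioi 0) (Filter.Eventually.of_forall fun _ ↦ (exp_pos _).le),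
    integral_exp_neg_Ioi_zero, ENNReal.ofReal_one]

namespace ProbabilityTheory

variable {r : ℝ}

lemma expMeasure_Ioc (hr : 0 < r) {a : ℝ} (ha : 0 ≤ a) (b : ℝ) :
    expMeasure r (Ioc a b) = ENNReal.ofReal (exp (-(r * a)) - exp (-(r * b))) := by
  have := isProbabilityMeasure_expMeasure hr
  rw [← measure_cdf (expMeasure r), StieltjesFunction.measure_Ioc, cdf_expMeasure_eq hr,
    cdf_expMeasure_eq hr, if_pos ha]
  split_ifs with hb
  · ring_nf
  · have hab : r * b ≤ r * a := by nlinarith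
    rw [ENNReal.ofReal_of_nonpos (by linarith [exp_le_one_iff.2 (by nlinarith : -(r * a) ≤ 0)]),
      ENNReal.ofReal_of_nonpos (sub_nonpos.2 (exp_le_exp.2 (neg_le_neg hab)))]

lemma expMeasure_Ioi (hr : 0 < r) {a : ℝ} (ha : 0 ≤ a) :
    expMeasure r (Ioi a) = ENNReal.ofReal (exp (-(r * a))) := by
  have := isProbabilityMeasure_expMeasure hr
  rw [← measure_cdf (expMeasure r), StieltjesFunction.measure_Ioi _ (tendsto_cdf_atTop _),
    cdf_expMeasure_eq hr, if_pos ha, sub_sub_cancel]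

lemma expMeasure_Iic_zero (hr : 0 < r) : expMeasure r (Iic 0) = 0 := by
  have := isProbabilityMeasure_expMeasure hr
  rw [← ofReal_cdf, cdf_expMeasure_eq hr, if_pos le_rfl, mul_zero, neg_zero, exp_zero, sub_self,
    ENNReal.ofReal_zero]

lemma expMeasure_prod_apply {ν : Measure ℝ} [SFinite ν] {s : Set (ℝ × ℝ)} (hs : MeasurableSet s) :
    (expMeasure r).prod ν s
      = ∫⁻ x in Ici 0, ENNReal.ofReal (r * exp (-(r * x))) * ν (Prod.mk x ⁻¹' s) := by
  have hdensity : ∀ x, exponentialPDF r x * ν (Prod.mk x ⁻¹' s)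
      = (Ici 0).indicator (fun x ↦ ENNReal.ofReal (r * exp (-(r * x))) * ν (Prod.mk x ⁻¹' s)) x := by
    intro x
    rcases le_or_gt 0 x with hx | hx
    · rw [indicator_of_mem (mem_Ici.2 hx), exponentialPDF_of_nonneg hx]
    · rw [indicator_of_notMem (notMem_Ici.2 hx), exponentialPDF_of_neg hx, zero_mul]
  rw [Measure.prod_apply hs, ← lintegral_indicator measurableSet_Ici, ← lintegral_congr hdensity,
    show expMeasure r = volume.withDensity (exponentialPDF r) from rfl]
  exact lintegral_withDensity_eq_lintegral_mul _ (measurable_exponentialPDFReal r).ennreal_ofReal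
    (measurable_measure_prodMk_left hs)

variable {lam mu : ℝ}

lemma expMeasure_prod_weightedSum_le_inter_mul_lt (hlam : 0 < lam) (hmu : 0 < mu) {a : ℝ}
    (ha : 0 ≤ a) (t : ℝ) :
    (expMeasure lam).prod (expMeasure mu) {p | lam * p.1 + mu * p.2 ≤ t ∧ a * p.1 < p.2}
      = ENNReal.ofReal (lam / (lam + a * mu))
          * ∫⁻ y in Ici 0, ENNReal.ofReal (exp (-y) - exp (-t)) := by
  have := isProbabilityMeasure_expMeasure hmu
  have hc : 0 < lam + a * mu := by positivity
  have hmeas : MeasurableSet {p : ℝ × ℝ | lam * p.1 + mu * p.2 ≤ t ∧ a * p.1 < p.2} := by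
    measurability
  have hslice : ∀ x, Prod.mk x ⁻¹' {p : ℝ × ℝ | lam * p.1 + mu * p.2 ≤ t ∧ a * p.1 < p.2}
      = Ioc (a * x) ((t - lam * x) / mu) := by
    intro x; ext y
    simp only [mem_preimage, mem_ofPred_eq, mem_Ioc, le_div_iff₀ hmu]
    constructor <;> rintro ⟨h₁, h₂⟩ <;> constructor <;> linarith
  rw [expMeasure_prod_apply hmeas, div_eq_mul_inv, ENNReal.ofReal_mul hlam.le, mul_assoc,
    ← setLIntegral_Ici_comp_mul_left hc fun y ↦ ENNReal.ofReal (exp (-y) - exp (-t)),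
    ← lintegral_const_mul' _ _ ENNReal.ofReal_ne_top]
  refine setLIntegral_congr_fun measurableSet_Ici fun x (hx : 0 ≤ x) ↦ ?_
  rw [hslice, expMeasure_Ioc hmu (mul_nonneg ha hx), mul_div_cancel₀ _ hmu.ne',
    ← ENNReal.ofReal_mul (by positivity), ← ENNReal.ofReal_mul hlam.le]
  have e₁ : exp (-(lam * x)) * exp (-(mu * (a * x))) = exp (-((lam + a * mu) * x)) := by
    rw [← exp_add]; ring_nf
  have e₂ : exp (-(lam * x)) * exp (-(t - lam * x)) = exp (-t) := by
    rw [← exp_add]; ring_nf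
  congr 1
  linear_combination lam * e₁ - lam * e₂

lemma expMeasure_prod_weightedSum_le_inter_lt (hlam : 0 < lam) (hmu : 0 < mu) (t : ℝ) :
    (expMeasure lam).prod (expMeasure mu) {p | lam * p.1 + mu * p.2 ≤ t ∧ p.1 < p.2}
      = ENNReal.ofReal (lam / (lam + mu))
          * ∫⁻ y in Ici 0, ENNReal.ofReal (exp (-y) - exp (-t)) := by
  simpa using expMeasure_prod_weightedSum_le_inter_mul_lt hlam hmu zero_le_one t

lemma expMeasure_prod_weightedSum_le (hlam : 0 < lam) (hmu : 0 < mu) (t : ℝ) :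
    (expMeasure lam).prod (expMeasure mu) {p | lam * p.1 + mu * p.2 ≤ t}
      = ∫⁻ y in Ici 0, ENNReal.ofReal (exp (-y) - exp (-t)) := by
  have := isProbabilityMeasure_expMeasure hlam
  have := isProbabilityMeasure_expMeasure hmu
  have hnull : (expMeasure lam).prod (expMeasure mu) {p : ℝ × ℝ | 0 * p.1 < p.2}ᶜ = 0 := by
    have : {p : ℝ × ℝ | 0 * p.1 < p.2}ᶜ = univ ×ˢ Iic 0 := by ext; simp
    rw [this, Measure.prod_prod, expMeasure_Iic_zero hmu, mul_zero]
  rw [← measure_inter_conull hnull]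
  exact (expMeasure_prod_weightedSum_le_inter_mul_lt hlam hmu le_rfl t).trans (by simp [hlam.ne'])

lemma expMeasure_prod_lt (hlam : 0 < lam) (hmu : 0 < mu) :
    (expMeasure lam).prod (expMeasure mu) {p | p.1 < p.2} = ENNReal.ofReal (lam / (lam + mu)) := by
  have := isProbabilityMeasure_expMeasure hmu
  have hc : 0 < lam + mu := by positivity
  rw [expMeasure_prod_apply (measurableSet_lt measurable_fst measurable_snd), ← mul_one
      (ENNReal.ofReal _), ← lintegral_Ici_exp_neg, div_eq_mul_inv, ENNReal.ofReal_mul hlam.le,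
    mul_assoc, ← setLIntegral_Ici_comp_mul_left hc fun y ↦ ENNReal.ofReal (exp (-y)),
    ← lintegral_const_mul' _ _ ENNReal.ofReal_ne_top]
  refine setLIntegral_congr_fun measurableSet_Ici fun x (hx : 0 ≤ x) ↦ ?_
  rw [show Prod.mk x ⁻¹' {p : ℝ × ℝ | p.1 < p.2} = Ioi x from rfl, expMeasure_Ioi hmu hx,
    ← ENNReal.ofReal_mul (by positivity), ← ENNReal.ofReal_mul hlam.le, mul_assoc, ← exp_add]
  ring_nf

lemma map_weightedSum_expMeasure_prod (hlam : 0 < lam) (hmu : 0 < mu) :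
    ((expMeasure lam).prod (expMeasure mu)).map (fun p ↦ lam * p.1 + mu * p.2)
      = ((expMeasure 1).prod (expMeasure 1)).map (fun p ↦ p.1 + p.2) := by
  have := isProbabilityMeasure_expMeasure hlam
  have := isProbabilityMeasure_expMeasure hmu
  refine Measure.ext_of_Iic _ _ fun t ↦ ?_
  rw [Measure.map_apply (by fun_prop) measurableSet_Iic,
    Measure.map_apply (by fun_prop) measurableSet_Iic]
  have hone := expMeasure_prod_weightedSum_le one_pos one_pos t
  simp only [one_mul] at hone
  exact (expMeasure_prod_weightedSum_le hlam hmu t).trans hone.symm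

lemma map_cond_eq_map_of_forall_measure_Iic_inter {Ω : Type*} [MeasurableSpace Ω]
    {P : Measure Ω} [IsFiniteMeasure P] {f : Ω → ℝ} {A : Set Ω} (hf : AEMeasurable f P)
    (hA : P A ≠ 0) (h : ∀ t, P ({ω | f ω ≤ t} ∩ A) = P {ω | f ω ≤ t} * P A) :
    (P[|A]).map f = P.map f := by
  have := cond_isProbabilityMeasure hA
  refine Measure.ext_of_Iic _ _ fun t ↦ ?_
  rw [Measure.map_apply_of_aemeasurable (hf.mono' cond_absolutelyContinuous) measurableSet_Iic,
    Measure.map_apply_of_aemeasurable hf measurableSet_Iic, cond, Measure.smul_apply, smul_eq_mul,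
    Measure.restrict_apply₀ (hf.restrict.nullMeasurable measurableSet_Iic)]
  change (P A)⁻¹ * P ({ω | f ω ≤ t} ∩ A) = P {ω | f ω ≤ t}
  rw [h t, mul_comm, mul_assoc, ENNReal.mul_inv_cancel hA (measure_ne_top P A), mul_one]

end ProbabilityTheory

/-- If `X ~ Exp(λ)` and `Y ~ Exp(μ)` are independent, then `S = λX + μY` is independent of the
event `[X < Y]` (i.e. `P(S ≤ t, X < Y) = P(S ≤ t) P(X < Y)` for all `t`), and conditional on
`[X < Y]`, `S` is distributed as the sum of two independent exponential(1) random variables. -/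
theorem weighted_sum_indep_of_order_event
    {Ω : Type*} [MeasurableSpace Ω] (P : Measure Ω) [IsProbabilityMeasure P]
    (lam mu : ℝ) (hlam : 0 < lam) (hmu : 0 < mu)
    (X Y : Ω → ℝ)
    (hX : Measure.map X P = expMeasure lam)
    (hY : Measure.map Y P = expMeasure mu)
    (hindep : IndepFun X Y P) :
    (∀ t : ℝ,
      P ({ω | lam * X ω + mu * Y ω ≤ t} ∩ {ω | X ω < Y ω}) =
        P {ω | lam * X ω + mu * Y ω ≤ t} * P {ω | X ω < Y ω}) ∧
    Measure.map (fun ω => lam * X ω + mu * Y ω) (P[|{ω | X ω < Y ω}]) =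
      Measure.map (fun p : ℝ × ℝ => p.1 + p.2)
        ((expMeasure 1).prod (expMeasure 1)) := by
  have := isProbabilityMeasure_expMeasure hlam
  have := isProbabilityMeasure_expMeasure hmu
  have hXm : AEMeasurable X P := .of_map_ne_zero (by rw [hX]; exact IsProbabilityMeasure.ne_zero _)
  have hYm : AEMeasurable Y P := .of_map_ne_zero (by rw [hY]; exact IsProbabilityMeasure.ne_zero _)
  have hlaw : P.map (fun ω ↦ (X ω, Y ω)) = (expMeasure lam).prod (expMeasure mu) := by
    rw [(indepFun_iff_map_prod_eq_prod_map_map hXm hYm).1 hindep, hX, hY]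
  have hP : ∀ s, MeasurableSet s →
      P ((fun ω ↦ (X ω, Y ω)) ⁻¹' s) = (expMeasure lam).prod (expMeasure mu) s := fun s hs ↦ by
    rw [← hlaw, Measure.map_apply_of_aemeasurable (hXm.prodMk hYm) hs]
  have hA : P {ω | X ω < Y ω} = ENNReal.ofReal (lam / (lam + mu)) :=
    (hP _ (by measurability)).trans (expMeasure_prod_lt hlam hmu)
  have hS : ∀ t, P {ω | lam * X ω + mu * Y ω ≤ t}
      = (expMeasure lam).prod (expMeasure mu) {p | lam * p.1 + mu * p.2 ≤ t} := fun t ↦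
    hP {p | lam * p.1 + mu * p.2 ≤ t} (by measurability)
  have hSA : ∀ t, P ({ω | lam * X ω + mu * Y ω ≤ t} ∩ {ω | X ω < Y ω})
      = (expMeasure lam).prod (expMeasure mu) {p | lam * p.1 + mu * p.2 ≤ t ∧ p.1 < p.2} :=
    fun t ↦ hP {p | lam * p.1 + mu * p.2 ≤ t ∧ p.1 < p.2} (by measurability)
  have hindepIic : ∀ t, P ({ω | lam * X ω + mu * Y ω ≤ t} ∩ {ω | X ω < Y ω})
      = P {ω | lam * X ω + mu * Y ω ≤ t} * P {ω | X ω < Y ω} := fun t ↦ by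
    rw [hSA, hS, hA, expMeasure_prod_weightedSum_le_inter_lt hlam hmu,
      expMeasure_prod_weightedSum_le hlam hmu, mul_comm]
  refine ⟨hindepIic, ?_⟩
  rw [map_cond_eq_map_of_forall_measure_Iic_inter (by fun_prop)
      (hA ▸ (ENNReal.ofReal_pos.2 (by positivity)).ne') hindepIic,
    ← map_weightedSum_expMeasure_prod hlam hmu, ← hlaw,
    AEMeasurable.map_map_of_aemeasurable (by fun_prop) (hXm.prodMk hYm)]
  rfl
end

section
/- Under the nearest-item heuristic with n i.i.d. uniform item locations, the total travel time T_n^{NI} is stochastically bounded by 1 - 1/2^n, i.e., P(T_n^{NI} ≤ 1 - 2^{-n}) = 1, and this bound is tight. -/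
open MeasureTheory ProbabilityTheory

/-- Circular (shortest-arc) distance between points `p` and `x` on the circle `ℝ/ℤ`
of circumference 1. -/
noncomputable def circDist (p x : ℝ) : ℝ := min (Int.fract (x - p)) (Int.fract (p - x))

/-- The route of the picker under the nearest-item heuristic: starting at `p`, repeatedly
travel to the nearest (in circular distance) remaining item. -/
noncomputable def niRoute (p : ℝ) (S : Finset ℝ) : List ℝ :=
  if h : S.Nonempty then
    let x := Classical.choose (S.exists_min_image (circDist p) h)
    x :: niRoute x (S.erase x)
  else []
termination_by S.card
decreasing_by
  exact Finset.card_erase_lt_of_mem (Classical.choose_spec (S.exists_min_image (circDist p) h)).1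

/-- Total circular distance travelled along a route starting at `p`. -/
noncomputable def pathLength (p : ℝ) : List ℝ → ℝ
  | [] => 0
  | x :: xs => circDist p x + pathLength x xs

/-- The total travel time (= travel distance, at unit speed) of the picker under the
nearest-item heuristic, starting at `p`, with items at the positions in `S`. -/
noncomputable def niTravel (p : ℝ) (S : Finset ℝ) : ℝ := pathLength p (niRoute p S)

/-- The direction (clockwise = `true`) of the step from `p` to the nearest point `x`. -/
noncomputable def stepDir (p x : ℝ) : Bool := Int.fract (x - p) ≤ Int.fract (p - x)

/-- The list of directions of the successive steps of a route starting at `p`. -/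
noncomputable def routeDirs (p : ℝ) : List ℝ → List Bool
  | [] => []
  | x :: xs => stepDir p x :: routeDirs x xs

/-- The number of changes of direction in a list of step directions. -/
def countTurns : List Bool → ℕ
  | [] => 0
  | [_] => 0
  | a :: b :: rest => (if a ≠ b then 1 else 0) + countTurns (b :: rest)

/-- The number of turns (changes of direction) made by the picker under the nearest-item
heuristic starting at `p` with items at the positions in `S`. -/
noncomputable def niTurns (p : ℝ) (S : Finset ℝ) : ℕ := countTurns (routeDirs p (niRoute p S))

/-- The order statistics of `u`, extended with `0` at the bottom and `1` at the top. -/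
noncomputable def sortedExt (n : ℕ) (u : Fin n → ℝ) : Fin (n + 2) → ℝ :=
  Fin.cons 0 (Fin.snoc (u ∘ Tuple.sort u) 1)

/-- The uniform spacings `D_{i+1,n} = U_{(i+1):n} - U_{i:n}` (0-indexed by `i : Fin (n+1)`). -/
noncomputable def spacing (n : ℕ) (u : Fin n → ℝ) (i : Fin (n + 1)) : ℝ :=
  sortedExt n u i.succ - sortedExt n u i.castSucc

/-!
If every remaining item lies within distance `L` of the picker in one fixed direction, the
remaining travel is at most `L`. After a first step of length `d` to the nearest item, the other
items lie within `1 - 2d` beyond it, so with `m` items the travel is at most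
`d + min (1 - 2d) (1 - 2^{1-m}) ≤ 1 - 2^{-m}`.

For tightness, put the items near `(2^k - 1)/2^n`, `k = 1, …, n`: each next item ahead is then
(just) the nearest one, so the picker walks around up to `1 - 2^{-n}`, and independence gives
every neighbourhood of this configuration positive probability.
-/

section FloorRing

variable {R : Type*} [CommRing R] [LinearOrder R] [IsStrictOrderedRing R] [FloorRing R]

lemma Int.fract_sub_eq_sub_fract {a b : R} (h : Int.fract b ≤ Int.fract a) :
    Int.fract (a - b) = Int.fract a - Int.fract b := by
  rw [Int.fract_eq_iff]
  refine ⟨sub_nonneg.mpr h, by linarith [Int.fract_lt_one a, Int.fract_nonneg b],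
    ⌊a⌋ - ⌊b⌋, ?_⟩
  rw [Int.fract, Int.fract]; push_cast; ring

lemma Int.fract_add_fract_neg_le_one (a : R) : Int.fract a + Int.fract (-a) ≤ 1 := by
  rcases eq_or_ne (Int.fract a) 0 with h | h
  · rw [Int.fract_neg_eq_zero.mpr h, h]; norm_num
  · rw [Int.fract_neg h]; linarith

end FloorRing

lemma circDist_eq_min_fract {σ : ℝ} (hσ : |σ| = 1) (p y : ℝ) :
    circDist p y = min (Int.fract (σ * (y - p))) (Int.fract (-(σ * (y - p)))) := by
  rcases (abs_eq zero_le_one).mp hσ with rfl | rfl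
  · simp [circDist]
  · simp [circDist, min_comm]

lemma circDist_le_fract_mul {σ : ℝ} (hσ : |σ| = 1) (p y : ℝ) :
    circDist p y ≤ Int.fract (σ * (y - p)) :=
  (circDist_eq_min_fract hσ p y).trans_le (min_le_left _ _)

lemma circDist_le_half (p y : ℝ) : circDist p y ≤ 1 / 2 := by
  rw [circDist, ← neg_sub y p]
  linarith [min_le_left (Int.fract (y - p)) (Int.fract (-(y - p))),
    min_le_right (Int.fract (y - p)) (Int.fract (-(y - p))), Int.fract_add_fract_neg_le_one (y - p)]

lemma exists_circDist_eq_fract_mul (p x : ℝ) :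
    ∃ σ : ℝ, |σ| = 1 ∧ circDist p x = Int.fract (σ * (x - p)) := by
  rcases min_choice (Int.fract (x - p)) (Int.fract (p - x)) with h | h
  · exact ⟨1, abs_one, by rw [circDist, h, one_mul]⟩
  · exact ⟨-1, by simp, by rw [circDist, h, neg_one_mul, neg_sub]⟩

lemma fract_mul_sub_eq {σ p x y : ℝ} (hσ : |σ| = 1)
    (hy : Int.fract (σ * (x - p)) ≤ circDist p y) :
    Int.fract (σ * (y - x)) = Int.fract (σ * (y - p)) - Int.fract (σ * (x - p)) := by
  rw [show σ * (y - x) = σ * (y - p) - σ * (x - p) by ring]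
  exact Int.fract_sub_eq_sub_fract (hy.trans (circDist_le_fract_mul hσ p y))

lemma fract_mul_sub_le {σ p x y : ℝ} (hσ : |σ| = 1)
    (hy : Int.fract (σ * (x - p)) ≤ circDist p y) :
    Int.fract (σ * (y - x)) ≤ 1 - 2 * Int.fract (σ * (x - p)) := by
  have hback : Int.fract (σ * (x - p)) ≤ Int.fract (-(σ * (y - p))) := by
    refine hy.trans ?_
    simpa [neg_mul] using circDist_le_fract_mul (σ := -σ) (by rwa [abs_neg]) p y
  rw [fract_mul_sub_eq hσ hy]
  linarith [Int.fract_add_fract_neg_le_one (σ * (y - p))]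

lemma niTravel_empty (p : ℝ) : niTravel p ∅ = 0 := by
  rw [niTravel, niRoute, dif_neg Finset.not_nonempty_empty, pathLength]

lemma exists_niTravel_eq {S : Finset ℝ} (hS : S.Nonempty) (p : ℝ) :
    ∃ x ∈ S, (∀ y ∈ S, circDist p x ≤ circDist p y) ∧
      niTravel p S = circDist p x + niTravel x (S.erase x) := by
  obtain ⟨hx, hmin⟩ := Classical.choose_spec (S.exists_min_image (circDist p) hS)
  exact ⟨_, hx, hmin, by rw [niTravel, niRoute, dif_pos hS, pathLength, niTravel]⟩

theorem niTravel_le_of_forall_fract_le (S : Finset ℝ) :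
    ∀ {p σ L : ℝ}, |σ| = 1 → 0 ≤ L → (∀ y ∈ S, Int.fract (σ * (y - p)) ≤ L) →
      niTravel p S ≤ L := by
  induction S using Finset.strongInduction with
  | H S ih =>
  intro p σ L hσ hL hS
  rcases S.eq_empty_or_nonempty with rfl | hne
  · rwa [niTravel_empty]
  obtain ⟨x, hx, hmin, hrec⟩ := exists_niTravel_eq hne p
  have hmin' : ∀ y ∈ S.erase x, circDist p x ≤ circDist p y :=
    fun y hy => hmin y (S.mem_of_mem_erase hy)
  rw [hrec]
  rcases le_or_gt (Int.fract (σ * (x - p))) (Int.fract (-(σ * (x - p)))) with hfwd | hbwd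
  · have hd : circDist p x = Int.fract (σ * (x - p)) := by
      rw [circDist_eq_min_fract hσ, min_eq_left hfwd]
    have hrest : niTravel x (S.erase x) ≤ L - circDist p x :=
      ih _ (S.erase_ssubset hx) hσ (by linarith [hS x hx]) fun y hy => by
        rw [hd, fract_mul_sub_eq hσ (hd ▸ hmin' y hy)]
        linarith [hS y (S.mem_of_mem_erase hy)]
    linarith
  · have hσ' : |-σ| = 1 := by rwa [abs_neg]
    have hd : circDist p x = Int.fract (-σ * (x - p)) := by
      rw [circDist_eq_min_fract hσ, min_eq_right hbwd.le, neg_mul]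
    have hrest : niTravel x (S.erase x) ≤ 1 - 2 * circDist p x :=
      ih _ (S.erase_ssubset hx) hσ' (by linarith [circDist_le_half p x])
        fun y hy => hd ▸ fract_mul_sub_le hσ' (hd ▸ hmin' y hy)
    -- `x` itself lies `1 - d` away from `p` in direction `σ`
    have hxL : 1 - circDist p x ≤ L := by
      have hx0 : Int.fract (σ * (x - p)) ≠ 0 := by
        linarith [Int.fract_nonneg (-(σ * (x - p)))]
      rw [hd, neg_mul, Int.fract_neg hx0, sub_sub_cancel]
      exact hS x hx
    linarith

theorem niTravel_le_one_sub_inv_two_pow_card (S : Finset ℝ) (p : ℝ) :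
    niTravel p S ≤ 1 - ((2 : ℝ) ^ S.card)⁻¹ := by
  induction S using Finset.strongInduction generalizing p with
  | H S ih =>
  rcases S.eq_empty_or_nonempty with rfl | hne
  · simp [niTravel_empty]
  obtain ⟨x, hx, hmin, hrec⟩ := exists_niTravel_eq hne p
  obtain ⟨σ, hσ, hd⟩ := exists_circDist_eq_fract_mul p x
  have hnear : niTravel x (S.erase x) ≤ 1 - 2 * circDist p x :=
    niTravel_le_of_forall_fract_le _ hσ (by linarith [circDist_le_half p x])
      fun y hy => hd ▸ fract_mul_sub_le hσ (hd ▸ hmin y (S.mem_of_mem_erase hy))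
  have hrest := ih _ (S.erase_ssubset hx) x
  have hcard : (2 : ℝ) ^ S.card = 2 * 2 ^ (S.erase x).card := by
    rw [← Finset.card_erase_add_one hx, pow_succ, mul_comm]
  rw [hrec, hcard, mul_inv, le_sub_iff_add_le]
  set q := ((2 : ℝ) ^ (S.erase x).card)⁻¹
  rcases le_or_gt (circDist p x) (q / 2) with h | h <;> linarith

lemma circDist_eq_min_of_lt {a b : ℝ} (hab : a < b) (hb : b - a < 1) :
    circDist a b = min (b - a) (1 - (b - a)) := by
  have hfract : Int.fract (b - a) = b - a := Int.fract_eq_self.mpr ⟨by linarith, hb⟩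
  rw [circDist, show a - b = -(b - a) by ring, Int.fract_neg (by linarith), hfract]

lemma niTravel_eq_of_forall_lt {S : Finset ℝ} {p x : ℝ} (hx : x ∈ S)
    (hnear : ∀ y ∈ S, y ≠ x → circDist p x < circDist p y) :
    niTravel p S = circDist p x + niTravel x (S.erase x) := by
  obtain ⟨x', hx', hmin, hrec⟩ := exists_niTravel_eq ⟨x, hx⟩ p
  obtain rfl : x' = x := by
    by_contra hne
    exact (hmin x hx).not_gt (hnear x' hx' hne)
  exact hrec

/-- `hstep`: the next item ahead is strictly nearer than the last item is from behind. -/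
theorem niTravel_image_Ioi_eq {N : ℕ} {v : Fin (N + 1) → ℝ} (hmono : StrictMono v)
    (hstep : ∀ i : Fin N, v i.succ + v (Fin.last N) < 1 + 2 * v i.castSucc) (k : Fin (N + 1)) :
    niTravel (v k) ((Finset.Ioi k).image v) = v (Fin.last N) - v k := by
  induction k using Fin.reverseInduction with
  | last =>
    rw [Finset.Ioi_eq_empty.mpr fun _ _ => Fin.le_last _, Finset.image_empty, niTravel_empty,
      sub_self]
  | cast i ih =>
    have hlt := hmono i.castSucc_lt_succ
    have hlast : ∀ j, v j ≤ v (Fin.last N) := fun j => hmono.monotone (Fin.le_last j)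
    have hnext : circDist (v i.castSucc) (v i.succ) = v i.succ - v i.castSucc := by
      rw [circDist_eq_min_of_lt hlt (by linarith [hstep i, hlast i.succ]),
        min_eq_left (by linarith [hstep i, hlast i.succ])]
    have hnear : ∀ y ∈ (Finset.Ioi i.castSucc).image v, y ≠ v i.succ →
        circDist (v i.castSucc) (v i.succ) < circDist (v i.castSucc) y := by
      simp only [Finset.mem_image, Finset.mem_Ioi]
      rintro _ ⟨j, hj, rfl⟩ hne
      have hij : i.succ < j :=
        lt_of_le_of_ne (Fin.castSucc_lt_iff_succ_le.mp hj) fun h => hne (congrArg v h.symm)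
      have hvj := hmono hij
      rw [hnext, circDist_eq_min_of_lt (hlt.trans hvj) (by linarith [hstep i, hlast j])]
      exact lt_min (by linarith) (by linarith [hstep i, hlast j])
    have herase : ((Finset.Ioi i.castSucc).image v).erase (v i.succ) =
        (Finset.Ioi i.succ).image v := by
      rw [← Finset.image_erase hmono.injective]
      congr 1
      ext j
      simp only [Finset.mem_erase, Finset.mem_Ioi, Fin.castSucc_lt_iff_succ_le]
      exact ⟨fun ⟨hne, hle⟩ => lt_of_le_of_ne hle (Ne.symm hne), fun h => ⟨h.ne', h.le⟩⟩
    have hmem := Finset.mem_image_of_mem v (Finset.mem_Ioi.mpr i.castSucc_lt_succ)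
    rw [niTravel_eq_of_forall_lt hmem hnear, herase, ih, hnext]
    ring

/-- At `η = 0` the item ahead and the last item seen from behind are equally near at every
step; the shift `4 k η` breaks these ties in favour of walking ahead. -/
noncomputable def worstCasePos (n : ℕ) (η : ℝ) (k : ℕ) : ℝ :=
  (2 ^ k - 1) / 2 ^ n - 4 * k * η

lemma worstCasePos_mem_Ioo {n k : ℕ} {η : ℝ} (hk₀ : 0 < k) (hkn : k ≤ n) (hη : 0 < η)
    (hηn : 4 * η < (2 ^ n)⁻¹) : worstCasePos n η k ∈ Set.Ioo 0 1 := by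
  have hpow : (2 : ℝ) ^ k ≤ 2 ^ n := pow_le_pow_right₀ one_le_two hkn
  have hk : (k : ℝ) + 1 ≤ 2 ^ k := by exact_mod_cast Nat.lt_two_pow_self
  have hk₁ : (1 : ℝ) ≤ k := by exact_mod_cast hk₀
  have h2n : (0 : ℝ) < 2 ^ n := by positivity
  rw [worstCasePos, div_eq_mul_inv]
  constructor <;> nlinarith [mul_pos h2n hη, mul_inv_cancel₀ h2n.ne']

lemma strictMono_and_step_of_near_worstCasePos {n : ℕ} {η : ℝ} (hηn : 6 * η < (2 ^ n)⁻¹)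
    {v : Fin (n + 1) → ℝ} (hv : ∀ k, |v k - worstCasePos n η k| < η) :
    StrictMono v ∧ ∀ i : Fin n, v i.succ + v (Fin.last n) < 1 + 2 * v i.castSucc := by
  have h2n : (2 : ℝ) ^ n * (2 ^ n)⁻¹ = 1 := mul_inv_cancel₀ (by positivity)
  have hβ : (0 : ℝ) < (2 ^ n)⁻¹ := by positivity
  have hnear := fun k => abs_lt.mp (hv k)
  refine ⟨Fin.strictMono_iff_lt_succ.mpr fun i => ?_, fun i => ?_⟩ <;>
  · obtain ⟨hi₁, hi₂⟩ := hnear i.castSucc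
    obtain ⟨hs₁, hs₂⟩ := hnear i.succ
    obtain ⟨hl₁, hl₂⟩ := hnear (Fin.last n)
    have hi : (1 : ℝ) ≤ 2 ^ (i : ℕ) := one_le_pow₀ one_le_two
    have hin : ((i : ℕ) : ℝ) + 1 ≤ n := by exact_mod_cast i.isLt
    simp only [worstCasePos, div_eq_mul_inv, Fin.val_castSucc, Fin.val_succ, Fin.val_last,
      pow_succ, Nat.cast_add, Nat.cast_one] at *
    nlinarith [mul_le_mul_of_nonneg_right hi hβ.le]

theorem lt_niTravel_of_near_worstCasePos {n : ℕ} {η : ℝ} (hη : 0 < η)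
    (hηn : 6 * η < (2 ^ n)⁻¹)
    {u : Fin n → ℝ} (hu : ∀ i : Fin n, |u i - worstCasePos n η (i + 1)| < η) :
    1 - ((2 : ℝ) ^ n)⁻¹ - (4 * n + 1) * η < niTravel 0 (Finset.univ.image u) := by
  set v : Fin (n + 1) → ℝ := Fin.cons 0 u
  have hv : ∀ k, |v k - worstCasePos n η k| < η := by
    refine Fin.cases ?_ fun i => ?_
    · simpa [v, worstCasePos] using hη
    · simpa [v] using hu i
  obtain ⟨hmono, hstep⟩ := strictMono_and_step_of_near_worstCasePos hηn hv
  have himage : (Finset.Ioi 0).image v = Finset.univ.image u := by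
    rw [Fin.Ioi_zero_eq_map, Finset.map_eq_image, Finset.image_image]
    rfl
  have htravel := niTravel_image_Ioi_eq hmono hstep 0
  rw [himage] at htravel
  rw [show (0 : ℝ) = v 0 from rfl, htravel]
  have h2n : (2 : ℝ) ^ n * (2 ^ n)⁻¹ = 1 := mul_inv_cancel₀ (by positivity)
  have hlast := (abs_lt.mp (hv (Fin.last n))).1
  simp only [worstCasePos, div_eq_mul_inv, Fin.val_last] at hlast
  simp only [v, Fin.cons_zero]
  nlinarith

theorem measure_forall_mem_ball_pos {ι Ω : Type*} [Fintype ι] [MeasurableSpace Ω]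
    {μ : Measure Ω} {U : ι → Ω → ℝ} (hindep : iIndepFun U μ)
    (hunif : ∀ i, μ.map (U i) = volume.restrict (Set.Ico 0 1)) {c : ι → ℝ}
    (hc : ∀ i, c i ∈ Set.Ioo 0 1) {r : ℝ} (hr : 0 < r) :
    0 < μ {ω | ∀ i, U i ω ∈ Metric.ball (c i) r} := by
  have hball : ∀ i, 0 < μ (U i ⁻¹' Metric.ball (c i) r) := by
    intro i
    have hU : AEMeasurable (U i) μ := AEMeasurable.of_map_ne_zero (by simp [hunif i])
    rw [← Measure.map_apply_of_aemeasurable hU measurableSet_ball, hunif i,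
      Measure.restrict_apply measurableSet_ball]
    refine lt_of_lt_of_le ?_
      (measure_mono (Set.inter_subset_inter_right _ Set.Ioo_subset_Ico_self))
    exact (Metric.isOpen_ball.inter isOpen_Ioo).measure_pos _
      ⟨c i, Metric.mem_ball_self hr, hc i⟩
  rw [show {ω | ∀ i, U i ω ∈ Metric.ball (c i) r} = ⋂ i, U i ⁻¹' Metric.ball (c i) r by
      ext; simp, hindep.meas_iInter fun i => ⟨_, measurableSet_ball, rfl⟩]
  exact CanonicallyOrderedAdd.prod_pos.mpr fun i _ => hball i

/-- The nearest-item travel time for `n` i.i.d. uniform item locations is a.s. at most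
`1 - 2^{-n}`, and this bound is tight: for every `ε > 0` the travel time exceeds
`1 - 2^{-n} - ε` with positive probability. -/
theorem nearestItem_travelTime_bound_tight
    {Ω : Type*} [MeasurableSpace Ω] (μ : Measure Ω) [IsProbabilityMeasure μ]
    (n : ℕ) (U : Fin n → Ω → ℝ)
    (hUindep : iIndepFun U μ)
    (hUunif : ∀ i, Measure.map (U i) μ = volume.restrict (Set.Ico (0 : ℝ) 1)) :
    μ {ω | niTravel 0 (Finset.image (fun i => U i ω) Finset.univ) ≤
        1 - ((2 : ℝ) ^ n)⁻¹} = 1 ∧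
    ∀ ε : ℝ, 0 < ε →
      0 < μ {ω | 1 - ((2 : ℝ) ^ n)⁻¹ - ε <
        niTravel 0 (Finset.image (fun i => U i ω) Finset.univ)} := by
  refine ⟨?_, fun ε hε => ?_⟩
  · refine (congrArg μ (Set.eq_univ_of_forall fun ω => ?_)).trans measure_univ
    have hcard : (Finset.univ.image fun i => U i ω).card ≤ n :=
      Finset.card_image_le.trans (Finset.card_fin n).le
    refine (niTravel_le_one_sub_inv_two_pow_card _ 0).trans ?_
    gcongr
    exact one_le_two
  · obtain ⟨η, hη, hηn, hηε⟩ :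
        ∃ η : ℝ, 0 < η ∧ 6 * η < (2 ^ n)⁻¹ ∧ (4 * n + 1) * η < ε := by
      obtain ⟨η, hη, hηε⟩ := exists_pos_mul_lt hε (4 * n + 1)
      refine ⟨min η ((2 ^ n)⁻¹ / 7), lt_min hη (by positivity), ?_, ?_⟩
      · linarith [min_le_right η ((2 ^ n)⁻¹ / 7), (by positivity : (0 : ℝ) < (2 ^ n)⁻¹)]
      · exact (mul_le_mul_of_nonneg_left (min_le_left _ _) (by positivity)).trans_lt hηε
    refine (measure_forall_mem_ball_pos hUindep hUunif
      (fun i => worstCasePos_mem_Ioo i.succ_pos i.isLt hη (by linarith)) hη).trans_le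
      (measure_mono fun ω hω => ?_)
    have hnear := lt_niTravel_of_near_worstCasePos hη hηn (u := fun i => U i ω)
      fun i => by simpa [Real.dist_eq] using hω i
    exact (sub_le_sub_left hηε.le _).trans_lt hnear
end

section
/- Let B, W, A be nonnegative random variables with B having distribution function F_B and an approximating distribution F̃_B with ‖F_B - F̃_B‖_∞ = ε. Let F_W and F̃_W denote the stationary distributions solving W =_d max{0, B - A - W} under F_B and F̃_B respectively. If P(B > A) < 1, then ‖F_W - F̃_W‖_∞ ≤ ε/(1 - P(B > A)). -/
/-!
Write `Φ_ν π` for the law of `max 0 (B - A - W)`. For `x ≥ 0`,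
`Φ_ν π (-∞, x] = E[π [B - A - x, ∞)]`. Replacing `π` by `π'` with `sup |F_π - F_π'| ≤ d`
moves this by at most `d · P(A < B)`, because on `{B ≤ A}` both tails equal `1` (`W ≥ 0`).
Integrating over `W` first, `Φ_ν π (-∞, x] = E[F_ν(A + x + W)]`, so replacing `ν` by `ν'` moves it
by at most `ε`. For the two fixed points this gives `d ≤ ε + d · P(A < B)`.
-/

open MeasureTheory ProbabilityTheory Filter Set
open scoped ENNReal

section Tails

variable {μ μ' : Measure ℝ}

lemma measure_Ici_eq_one_of_Iio_zero [IsProbabilityMeasure μ] (h : μ (Iio 0) = 0) {t : ℝ}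
    (ht : t ≤ 0) : μ (Ici t) = 1 := by
  rw [← compl_Iio, prob_compl_eq_one_iff measurableSet_Iio]
  exact measure_mono_null (Iio_subset_Iio ht) h

lemma measure_Iio_le_add_of_Iic_le {D : ℝ≥0∞} (h : ∀ s, μ (Iic s) ≤ μ' (Iic s) + D) (t : ℝ) :
    μ (Iio t) ≤ μ' (Iio t) + D := by
  have hmono : Monotone fun n : ℕ => Iic (t - 1 / (n + 1)) := fun m n hmn =>
    Iic_subset_Iic.2 (sub_le_sub_left (Nat.one_div_le_one_div hmn) t)
  have hlt : ∀ n : ℕ, t - 1 / (n + 1) < t := fun n => sub_lt_self t Nat.one_div_pos_of_nat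
  have hunion : ⋃ n : ℕ, Iic (t - 1 / (n + 1)) = Iio t :=
    iUnion_Iic_eq_Iio_of_lt_of_tendsto hlt
      (by simpa using tendsto_one_div_add_atTop_nhds_zero_nat.const_sub t)
  refine le_of_tendsto' (hunion ▸ tendsto_measure_iUnion_atTop hmono) fun n => ?_
  exact (h _).trans (add_le_add_left (measure_mono (Iic_subset_Iio.2 (hlt n))) D)

lemma measure_Ici_le_add_of_Iic_le [IsProbabilityMeasure μ] [IsProbabilityMeasure μ']
    {D : ℝ≥0∞} (h : ∀ s, μ' (Iic s) ≤ μ (Iic s) + D) (t : ℝ) :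
    μ (Ici t) ≤ μ' (Ici t) + D := by
  rw [← compl_Iio, prob_compl_eq_one_sub measurableSet_Iio,
    prob_compl_eq_one_sub measurableSet_Iio, tsub_le_iff_right]
  calc (1 : ℝ≥0∞) = 1 - μ' (Iio t) + μ' (Iio t) := (tsub_add_cancel_of_le prob_le_one).symm
    _ ≤ 1 - μ' (Iio t) + (μ (Iio t) + D) := add_le_add_right (measure_Iio_le_add_of_Iic_le h t) _
    _ = 1 - μ' (Iio t) + D + μ (Iio t) := by ring

lemma measure_Iic_le_add_of_abs_cdf_sub_le [IsProbabilityMeasure μ] [IsProbabilityMeasure μ']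
    {x c : ℝ} (h : |cdf μ x - cdf μ' x| ≤ c) :
    μ (Iic x) ≤ μ' (Iic x) + ENNReal.ofReal c := by
  rw [← ofReal_cdf, ← ofReal_cdf, ← ENNReal.ofReal_add (cdf_nonneg _ _) ((abs_nonneg _).trans h)]
  exact ENNReal.ofReal_le_ofReal (by linarith [le_abs_self (cdf μ x - cdf μ' x)])

lemma abs_cdf_sub_le_toReal [IsProbabilityMeasure μ] [IsProbabilityMeasure μ'] {x : ℝ}
    {K : ℝ≥0∞} (hK : K ≠ ∞) (h₁ : μ (Iic x) ≤ μ' (Iic x) + K)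
    (h₂ : μ' (Iic x) ≤ μ (Iic x) + K) : |cdf μ x - cdf μ' x| ≤ K.toReal := by
  rw [cdf_eq_real, cdf_eq_real, measureReal_def, measureReal_def, abs_sub_le_iff]
  constructor
  · linarith [ENNReal.toReal_le_add h₁ (measure_ne_top _ _) hK]
  · linarith [ENNReal.toReal_le_add h₂ (measure_ne_top _ _) hK]

lemma lintegral_measure_Ici_sub [SFinite μ] {π : Measure ℝ} [SFinite π] (c : ℝ) :
    ∫⁻ b, π (Ici (b - c)) ∂μ = ∫⁻ w, μ (Iic (c + w)) ∂π := by
  have hS : MeasurableSet {q : ℝ × ℝ | q.1 - c ≤ q.2} :=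
    measurableSet_le (by fun_prop) (by fun_prop)
  calc ∫⁻ b, π (Ici (b - c)) ∂μ = μ.prod π {q : ℝ × ℝ | q.1 - c ≤ q.2} :=
        (Measure.prod_apply hS).symm
    _ = ∫⁻ w, μ (Iic (c + w)) ∂π := by
        rw [Measure.prod_apply_symm hS]
        refine lintegral_congr fun w => congrArg μ ?_
        ext b
        exact sub_le_iff_le_add' (a := b)

end Tails

noncomputable def waitingMap (α ν π : Measure ℝ) : Measure ℝ :=
  (α.prod (ν.prod π)).map fun p : ℝ × ℝ × ℝ => max 0 (p.2.1 - p.1 - p.2.2)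

section WaitingMap

variable {α ν π : Measure ℝ}

lemma measurable_max_zero_sub_sub :
    Measurable fun p : ℝ × ℝ × ℝ => max 0 (p.2.1 - p.1 - p.2.2) := by
  fun_prop

instance [IsProbabilityMeasure α] [IsProbabilityMeasure ν] [IsProbabilityMeasure π] :
    IsProbabilityMeasure (waitingMap α ν π) :=
  Measure.isProbabilityMeasure_map measurable_max_zero_sub_sub.aemeasurable

lemma waitingMap_Iio_zero : waitingMap α ν π (Iio 0) = 0 := by
  rw [waitingMap, Measure.map_apply measurable_max_zero_sub_sub measurableSet_Iio]
  convert measure_empty (μ := α.prod (ν.prod π))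
  ext p
  simp

lemma waitingMap_Iic_of_neg {x : ℝ} (hx : x < 0) : waitingMap α ν π (Iic x) = 0 :=
  measure_mono_null (Iic_subset_Iio.2 hx) waitingMap_Iio_zero

lemma waitingMap_Iic [SFinite ν] [SFinite π] {x : ℝ} (hx : 0 ≤ x) :
    waitingMap α ν π (Iic x) = ∫⁻ a, ∫⁻ b, π (Ici (b - a - x)) ∂ν ∂α := by
  have hS : MeasurableSet {p : ℝ × ℝ × ℝ | p.2.1 - p.1 - p.2.2 ≤ x} :=
    measurableSet_le (by fun_prop) (by fun_prop)
  have hpre : (fun p : ℝ × ℝ × ℝ => max 0 (p.2.1 - p.1 - p.2.2)) ⁻¹' Iic x =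
      {p | p.2.1 - p.1 - p.2.2 ≤ x} := by
    ext p
    simp [hx]
  rw [waitingMap, Measure.map_apply measurable_max_zero_sub_sub measurableSet_Iic, hpre,
    Measure.prod_apply hS]
  refine lintegral_congr fun a => ?_
  rw [Measure.prod_apply (hS.preimage measurable_prodMk_left)]
  refine lintegral_congr fun b => congrArg π ?_
  ext w
  simp only [mem_preimage, mem_ofPred_eq, mem_Ici]
  constructor <;> intro <;> linarith

lemma waitingMap_Iic_le_of_Ici_le [SFinite ν] {π₁ π₂ : Measure ℝ} [IsProbabilityMeasure π₁]
    [IsProbabilityMeasure π₂] (h₂ : π₂ (Iio 0) = 0) {D : ℝ≥0∞}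
    (h : ∀ t, π₁ (Ici t) ≤ π₂ (Ici t) + D) (x : ℝ) :
    waitingMap α ν π₁ (Iic x) ≤
      waitingMap α ν π₂ (Iic x) + D * (α.prod ν) {p : ℝ × ℝ | p.1 < p.2} := by
  rcases lt_or_ge x 0 with hx | hx
  · simp [waitingMap_Iic_of_neg hx]
  have pointwise : ∀ a b, π₁ (Ici (b - a - x)) ≤
      π₂ (Ici (b - a - x)) + (Ioi a).indicator (fun _ => D) b := by
    intro a b
    by_cases hab : a < b
    · simpa [indicator_of_mem (show b ∈ Ioi a from hab)] using h _
    · rw [measure_Ici_eq_one_of_Iio_zero h₂ (by linarith [not_lt.1 hab])]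
      exact prob_le_one.trans le_self_add
  have hIoi : Measurable fun a => ν (Ioi a) :=
    Antitone.measurable fun a b hab => measure_mono (Ioi_subset_Ioi hab)
  calc waitingMap α ν π₁ (Iic x) = ∫⁻ a, ∫⁻ b, π₁ (Ici (b - a - x)) ∂ν ∂α := waitingMap_Iic hx
    _ ≤ ∫⁻ a, ∫⁻ b, π₂ (Ici (b - a - x)) + (Ioi a).indicator (fun _ => D) b ∂ν ∂α :=
        lintegral_mono fun a => lintegral_mono fun b => pointwise a b
    _ = ∫⁻ a, (∫⁻ b, π₂ (Ici (b - a - x)) ∂ν) + D * ν (Ioi a) ∂α := by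
        refine lintegral_congr fun a => ?_
        rw [lintegral_add_right _ (measurable_const.indicator measurableSet_Ioi),
          lintegral_indicator_const measurableSet_Ioi]
    _ = waitingMap α ν π₂ (Iic x) + D * (α.prod ν) {p : ℝ × ℝ | p.1 < p.2} := by
        rw [lintegral_add_right _ (hIoi.const_mul D), lintegral_const_mul _ hIoi,
          Measure.prod_apply (measurableSet_lt (by fun_prop) (by fun_prop)), waitingMap_Iic hx]
        rfl

lemma waitingMap_Iic_le_of_Iic_le [IsProbabilityMeasure α] {ν₁ ν₂ : Measure ℝ} [SFinite ν₁]
    [SFinite ν₂] [IsProbabilityMeasure π] {E : ℝ≥0∞} (h : ∀ s, ν₁ (Iic s) ≤ ν₂ (Iic s) + E)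
    (x : ℝ) : waitingMap α ν₁ π (Iic x) ≤ waitingMap α ν₂ π (Iic x) + E := by
  rcases lt_or_ge x 0 with hx | hx
  · simp [waitingMap_Iic_of_neg hx]
  have inner : ∀ a, ∫⁻ b, π (Ici (b - a - x)) ∂ν₁ ≤ ∫⁻ b, π (Ici (b - a - x)) ∂ν₂ + E := by
    intro a
    simp only [sub_sub, lintegral_measure_Ici_sub]
    calc ∫⁻ w, ν₁ (Iic (a + x + w)) ∂π ≤ ∫⁻ w, ν₂ (Iic (a + x + w)) + E ∂π :=
          lintegral_mono fun w => h _
      _ = ∫⁻ w, ν₂ (Iic (a + x + w)) ∂π + E := by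
          rw [lintegral_add_right _ measurable_const, lintegral_const, measure_univ, mul_one]
  rw [waitingMap_Iic hx, waitingMap_Iic hx]
  calc ∫⁻ a, ∫⁻ b, π (Ici (b - a - x)) ∂ν₁ ∂α
      ≤ ∫⁻ a, ∫⁻ b, π (Ici (b - a - x)) ∂ν₂ + E ∂α := lintegral_mono inner
    _ = ∫⁻ a, ∫⁻ b, π (Ici (b - a - x)) ∂ν₂ ∂α + E := by
        rw [lintegral_add_right _ measurable_const, lintegral_const, measure_univ, mul_one]

end WaitingMap

lemma abs_cdf_waitingMap_sub_le (α : Measure ℝ) [IsProbabilityMeasure α] {ν ν' π π' : Measure ℝ}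
    [IsProbabilityMeasure ν] [IsProbabilityMeasure ν'] [IsProbabilityMeasure π]
    [IsProbabilityMeasure π'] (hπ : π (Iio 0) = 0) (hπ' : π' (Iio 0) = 0) {ε d : ℝ}
    (hν : ∀ x, |cdf ν x - cdf ν' x| ≤ ε) (hd : ∀ x, |cdf π x - cdf π' x| ≤ d) (x : ℝ) :
    |cdf (waitingMap α ν π) x - cdf (waitingMap α ν' π') x| ≤
      ε + d * ((α.prod ν) {p : ℝ × ℝ | p.1 < p.2}).toReal := by
  set R := (α.prod ν) {p : ℝ × ℝ | p.1 < p.2}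
  have hε : 0 ≤ ε := (abs_nonneg _).trans (hν 0)
  have hd₀ : 0 ≤ d := (abs_nonneg _).trans (hd 0)
  have hK : (ENNReal.ofReal ε + ENNReal.ofReal d * R).toReal = ε + d * R.toReal := by
    rw [ENNReal.toReal_add ENNReal.ofReal_ne_top (by finiteness), ENNReal.toReal_mul,
      ENNReal.toReal_ofReal hε, ENNReal.toReal_ofReal hd₀]
  rw [← hK]
  refine abs_cdf_sub_le_toReal (by finiteness) ?_ ?_
  · calc waitingMap α ν π (Iic x)
        ≤ waitingMap α ν π' (Iic x) + ENNReal.ofReal d * R :=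
          waitingMap_Iic_le_of_Ici_le hπ' (measure_Ici_le_add_of_Iic_le fun s =>
            measure_Iic_le_add_of_abs_cdf_sub_le (abs_sub_comm (cdf π s) _ ▸ hd s)) x
      _ ≤ waitingMap α ν' π' (Iic x) + ENNReal.ofReal ε + ENNReal.ofReal d * R := by
          gcongr
          exact waitingMap_Iic_le_of_Iic_le (fun s => measure_Iic_le_add_of_abs_cdf_sub_le (hν s)) x
      _ = waitingMap α ν' π' (Iic x) + (ENNReal.ofReal ε + ENNReal.ofReal d * R) := add_assoc _ _ _
  · calc waitingMap α ν' π' (Iic x)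
        ≤ waitingMap α ν π' (Iic x) + ENNReal.ofReal ε :=
          waitingMap_Iic_le_of_Iic_le (fun s =>
            measure_Iic_le_add_of_abs_cdf_sub_le (abs_sub_comm (cdf ν s) _ ▸ hν s)) x
      _ ≤ waitingMap α ν π (Iic x) + ENNReal.ofReal d * R + ENNReal.ofReal ε := by
          gcongr
          exact waitingMap_Iic_le_of_Ici_le hπ (measure_Ici_le_add_of_Iic_le fun s =>
            measure_Iic_le_add_of_abs_cdf_sub_le (hd s)) x
      _ = waitingMap α ν π (Iic x) + (ENNReal.ofReal ε + ENNReal.ofReal d * R) := by ring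

/-- Error bound for the stationary distribution of `W =_d max{0, B - A - W}`: if the
distribution of the rotation time `B` is replaced by an approximation whose distribution
function is uniformly within `ε`, and `P(B > A) < 1`, then the distribution functions of the
corresponding stationary waiting times are uniformly within `ε / (1 - P(B > A))`. Here `α`,
`ν`, `ν'` are the laws of `A`, `B`, `B̃`, and `πW`, `πW'` the corresponding stationary laws
of `W`, all independent on the right-hand side. -/
theorem stationary_waiting_time_error_bound
    (α ν ν' πW πW' : Measure ℝ)
    [IsProbabilityMeasure α] [IsProbabilityMeasure ν] [IsProbabilityMeasure ν']
    [IsProbabilityMeasure πW] [IsProbabilityMeasure πW']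
    (hfix : πW = Measure.map (fun p : ℝ × ℝ × ℝ => max 0 (p.2.1 - p.1 - p.2.2))
      (α.prod (ν.prod πW)))
    (hfix' : πW' = Measure.map (fun p : ℝ × ℝ × ℝ => max 0 (p.2.1 - p.1 - p.2.2))
      (α.prod (ν'.prod πW')))
    (ε : ℝ) (hε : ∀ x : ℝ, |cdf ν x - cdf ν' x| ≤ ε)
    (hBA : (α.prod ν) {p : ℝ × ℝ | p.1 < p.2} < 1) :
    ∀ x : ℝ, |cdf πW x - cdf πW' x| ≤
      ε / (1 - ((α.prod ν) {p : ℝ × ℝ | p.1 < p.2}).toReal) := by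
  have hW : waitingMap α ν πW = πW := hfix.symm
  have hW' : waitingMap α ν' πW' = πW' := hfix'.symm
  set ρ := ((α.prod ν) {p : ℝ × ℝ | p.1 < p.2}).toReal
  have hρ : ρ < 1 := ENNReal.toReal_lt_of_lt_ofReal (by simpa using hBA)
  have hbdd : BddAbove (range fun y => |cdf πW y - cdf πW' y|) := ⟨1, by
    rintro _ ⟨y, rfl⟩
    exact abs_sub_le_of_nonneg_of_le (cdf_nonneg _ _) (cdf_le_one _ _) (cdf_nonneg _ _)
      (cdf_le_one _ _)⟩
  set d := ⨆ y, |cdf πW y - cdf πW' y|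
  have hd : ∀ y, |cdf πW y - cdf πW' y| ≤ d := le_ciSup hbdd
  have hcontract : d ≤ ε + d * ρ := ciSup_le fun y => by
    have h := abs_cdf_waitingMap_sub_le α (hW ▸ waitingMap_Iio_zero)
      (hW' ▸ waitingMap_Iio_zero) hε hd y
    rwa [hW, hW'] at h
  intro x
  exact (hd x).trans ((le_div_iff₀ (sub_pos.2 hρ)).2 (by linarith))
end

section
/- Let W_A and W_NA denote the stationary waiting times of the picker in the alternating two-carousel model and the non-alternating (machine-repair) model respectively, under identical distributional assumptions for pick and rotation times. Then for every i, the partial sums satisfy Σ_{j=1}^i W^A_j ≥_{st} Σ_{j=1}^i W^{NA}_j, even though W^A and W^{NA} themselves are not stochastically ordered. -/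
open MeasureTheory ProbabilityTheory

/-- Waiting times of the picker in the alternating two-carousel model:
`W_0 = A_0 = 0` and `W_{n+1} = max{0, B_{n+1} - A_n - W_n}`. -/
noncomputable def waitAlt (a b : ℕ → ℝ) : ℕ → ℝ
  | 0 => 0
  | n + 1 => max 0 (b (n + 1) - (if n = 0 then 0 else a n) - waitAlt a b n)

/-- State of the non-alternating (machine-repair) two-carousel model after the `n`-th pick:
`(t, r₁, r₂)` where `t` is the completion time of the `n`-th pick and `r₁, r₂` are the times
at which the items currently rotating on the two carousels become available. The picker
serves whichever carousel is ready first; the served carousel immediately starts rotating a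
new order with the next unused rotation time. -/
noncomputable def naState (a b : ℕ → ℝ) : ℕ → ℝ × ℝ × ℝ
  | 0 => (0, b 1, b 2)
  | n + 1 =>
    let s := naState a b n
    let t' := max s.1 (min s.2.1 s.2.2) + a (n + 1)
    (t', max s.2.1 s.2.2, t' + b (n + 3))

/-- Waiting times of the picker (repairman) in the non-alternating machine-repair model. -/
noncomputable def waitNA (a b : ℕ → ℝ) : ℕ → ℝ
  | 0 => 0
  | n + 1 =>
    max 0 (min (naState a b n).2.1 (naState a b n).2.2 - (naState a b n).1)

/-!
Feed both models the same pick times `a` and rotation times `b`. In either model the waiting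
times up to pick `i` add up to the completion time of pick `i` minus the total pick time, so it
suffices to compare completion times pathwise. The alternating picker finishes pick `n + 1` at
`T (n + 1) = max (T n) (T (n - 1) + b (n + 1)) + a (n + 1)`, with `T (-1) = T 0 = 0`.
By induction, the non-alternating picker is never later: it finishes pick `n` by `T n`, and
the two carousels it has rotating are ready early enough that picking from the first (second)
to become ready would finish by `T (n + 1)` (`T (n + 2)`).
-/

open Finset

noncomputable def altCompletion (a b : ℕ → ℝ) : ℕ → ℝ
  | 0 => 0
  | 1 => max 0 (b 1) + a 1
  | n + 2 => max (altCompletion a b (n + 1)) (altCompletion a b n + b (n + 2)) + a (n + 2)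

theorem sum_Icc_one_eq_sub_sum_of_eq_sub_sub {M : Type*} [AddCommGroup M] {w c a : ℕ → M}
    (hc : c 0 = 0) (hw : ∀ n, w (n + 1) = c (n + 1) - c n - a (n + 1)) (i : ℕ) :
    ∑ j ∈ Icc 1 i, w j = c i - ∑ j ∈ Icc 1 i, a j := by
  induction i with
  | zero => simp [hc]
  | succ i ih =>
    rw [sum_Icc_succ_top (by omega), sum_Icc_succ_top (by omega), ih, hw]
    abel

theorem max_zero_sub_eq_max_sub {M : Type*} [AddCommGroup M] [LinearOrder M]
    [IsOrderedAddMonoid M] (x y : M) : max 0 (x - y) = max y x - y := by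
  rw [← max_sub_sub_right, sub_self]

section Carousels

variable (a b : ℕ → ℝ)

theorem altCompletion_add_le_succ (n : ℕ) :
    altCompletion a b n + a (n + 1) ≤ altCompletion a b (n + 1) := by
  cases n <;> simp [altCompletion]

theorem altCompletion_add_add_le (n : ℕ) :
    altCompletion a b n + b (n + 2) + a (n + 2) ≤ altCompletion a b (n + 2) := by
  simp [altCompletion]

theorem waitAlt_succ (n : ℕ) :
    waitAlt a b (n + 1) = altCompletion a b (n + 1) - altCompletion a b n - a (n + 1) := by
  induction n with
  | zero => simp [waitAlt, altCompletion]
  | succ n ih =>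
    rw [waitAlt, if_neg n.succ_ne_zero, ih, altCompletion,
      show b (n + 1 + 1) - a (n + 1) - (altCompletion a b (n + 1) - altCompletion a b n - a (n + 1))
        = altCompletion a b n + b (n + 2) - altCompletion a b (n + 1) by ring,
      max_zero_sub_eq_max_sub]
    ring

theorem naState_succ (n : ℕ) :
    naState a b (n + 1) =
      (max (naState a b n).1 (min (naState a b n).2.1 (naState a b n).2.2) + a (n + 1),
        max (naState a b n).2.1 (naState a b n).2.2,
        max (naState a b n).1 (min (naState a b n).2.1 (naState a b n).2.2) + a (n + 1)
          + b (n + 3)) := rfl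

theorem waitNA_succ (n : ℕ) :
    waitNA a b (n + 1) = (naState a b (n + 1)).1 - (naState a b n).1 - a (n + 1) := by
  rw [waitNA, max_zero_sub_eq_max_sub, naState_succ]
  ring

theorem sum_waitAlt (i : ℕ) :
    ∑ j ∈ Icc 1 i, waitAlt a b j = altCompletion a b i - ∑ j ∈ Icc 1 i, a j :=
  sum_Icc_one_eq_sub_sum_of_eq_sub_sub rfl (waitAlt_succ a b) i

theorem sum_waitNA (i : ℕ) :
    ∑ j ∈ Icc 1 i, waitNA a b j = (naState a b i).1 - ∑ j ∈ Icc 1 i, a j :=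
  sum_Icc_one_eq_sub_sum_of_eq_sub_sub (c := fun n => (naState a b n).1) rfl (waitNA_succ a b) i

variable {a}

theorem naState_le_altCompletion (ha : ∀ n, 0 ≤ a n) (n : ℕ) :
    (naState a b n).1 ≤ altCompletion a b n ∧
      min (naState a b n).2.1 (naState a b n).2.2 + a (n + 1) ≤ altCompletion a b (n + 1) ∧
      max (naState a b n).2.1 (naState a b n).2.2 + a (n + 2) ≤ altCompletion a b (n + 2) := by
  induction n with
  | zero =>
    refine ⟨le_rfl, ?_, ?_⟩
    · simp only [naState, altCompletion]
      linarith [min_le_left (b 1) (b 2), le_max_right 0 (b 1)]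
    · simp only [naState, altCompletion]
      gcongr ?_ + _
      exact max_le_max (by linarith [le_max_right 0 (b 1), ha 1]) (zero_add _).ge
  | succ n ih =>
    obtain ⟨hdone, hfirst, hsecond⟩ := ih
    have hpick : max (naState a b n).1 (min (naState a b n).2.1 (naState a b n).2.2) + a (n + 1)
        ≤ altCompletion a b (n + 1) := by
      rw [← max_add_add_right]
      exact max_le (by linarith [altCompletion_add_le_succ a b n]) hfirst
    rw [naState_succ]
    refine ⟨hpick, ?_, ?_⟩
    · exact (add_le_add_left (min_le_left _ _) _).trans hsecond
    · rw [← max_add_add_right]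
      refine max_le ?_ ?_
      · linarith [altCompletion_add_le_succ a b (n + 2), ha (n + 2)]
      · linarith [altCompletion_add_add_le a b (n + 1)]

theorem sum_waitNA_le_sum_waitAlt (ha : ∀ n, 0 ≤ a n) (i : ℕ) :
    ∑ j ∈ Icc 1 i, waitNA a b j ≤ ∑ j ∈ Icc 1 i, waitAlt a b j := by
  rw [sum_waitAlt, sum_waitNA]
  linarith [(naState_le_altCompletion b ha i).1]

end Carousels

theorem partial_sums_waiting_times_st_ordered_general
    {Ω : Type*} [MeasurableSpace Ω] (μ : Measure Ω)
    (A B : ℕ → Ω → ℝ) (hA : ∀ n ω, 0 ≤ A n ω) :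
    ∀ (i : ℕ) (x : ℝ),
      μ {ω | x < ∑ j ∈ Finset.Icc 1 i, waitNA (fun n => A n ω) (fun n => B n ω) j} ≤
      μ {ω | x < ∑ j ∈ Finset.Icc 1 i, waitAlt (fun n => A n ω) (fun n => B n ω) j} := by
  intro i x
  exact measure_mono fun ω hω => hω.trans_le (sum_waitNA_le_sum_waitAlt _ (fun n => hA n ω) i)

/-- Under identical distributional assumptions for the i.i.d. pick times `A` and i.i.d.
rotation times `B`, the partial sums of the picker's waiting times in the alternating
two-carousel model stochastically dominate those in the non-alternating (machine-repair)
model: for every `i`, `∑_{j=1}^i W^A_j ≥_st ∑_{j=1}^i W^{NA}_j`. -/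
theorem partial_sums_waiting_times_st_ordered
    {Ω : Type*} [MeasurableSpace Ω] (μ : Measure Ω) [IsProbabilityMeasure μ]
    (A B : ℕ → Ω → ℝ) (hA : ∀ n ω, 0 ≤ A n ω) (hB : ∀ n ω, 0 ≤ B n ω)
    (hAiid : iIndepFun A μ ∧
      ∀ i j, IdentDistrib (A i) (A j) μ μ)
    (hBiid : iIndepFun B μ ∧
      ∀ i j, IdentDistrib (B i) (B j) μ μ)
    (hAB : IndepFun (fun ω (n : ℕ) => A n ω) (fun ω (n : ℕ) => B n ω) μ) :
    ∀ (i : ℕ) (x : ℝ),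
      μ {ω | x < ∑ j ∈ Finset.Icc 1 i, waitNA (fun n => A n ω) (fun n => B n ω) j} ≤
      μ {ω | x < ∑ j ∈ Finset.Icc 1 i, waitAlt (fun n => A n ω) (fun n => B n ω) j} :=
  partial_sums_waiting_times_st_ordered_general μ A B hA
end
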